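/- If p and q are integers with p - q ≠ 1, then for all n ≥ 1, Σ_{i=1}^n i·V_i = (1/(p-q-1))·(n·(V_{n+1} - q·V_n) + 2q - Ψ(n)/(p-q-1)), where Ψ(n) = V_{n+1} - 2q·V_n + q^2·V_{n-1} + (p-2q)(q-1). -/
import Mathlib


def lucasV (p q : ℤ) : ℕ → ℤ
  | 0 => 2
  | 1 => p
  | n + 2 => p * lucasV p q (n + 1) - q * lucasV p q n

theorem stmt12 (p q : ℤ) (h : p - q ≠ 1) (n : ℕ) (hn : 1 ≤ n) :
    (∑ i ∈ Finset.Icc 1 n, (i : ℚ) * (lucasV p q i : ℚ)) =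
      (1 / ((p : ℚ) - q - 1)) *
        ((n : ℚ) * ((lucasV p q (n + 1) : ℚ) - q * lucasV p q n) + 2 * q -
          ((lucasV p q (n + 1) : ℚ) - 2 * q * lucasV p q n +
              (q : ℚ) ^ 2 * lucasV p q (n - 1) +
              ((p : ℚ) - 2 * q) * ((q : ℚ) - 1)) / ((p : ℚ) - q - 1)) := by
  have hd : (p : ℚ) - q - 1 ≠ 0 := by
    have h1 : (p - q - 1 : ℤ) ≠ 0 := by omega
    have h2 : ((p - q - 1 : ℤ) : ℚ) ≠ 0 := Int.cast_ne_zero.mpr h1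
    push_cast at h2; exact h2
  induction n, hn using Nat.le_induction with
  | base =>
    simp only [Finset.Icc_self, Finset.sum_singleton, lucasV, Nat.sub_self]
    push_cast
    field_simp
    ring
  | succ n hn ih =>
    rw [Finset.sum_Icc_succ_top (by omega : 1 ≤ n + 1), ih]
    obtain ⟨m, rfl⟩ := Nat.exists_eq_succ_of_ne_zero (by omega : n ≠ 0)
    simp only [Nat.add_sub_cancel, lucasV]
    push_cast
    field_simp
    ring
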